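/- arXiv:2312.16938 — 3 statements merged into one kernel-verified Lean document; each statement's English description precedes it below -/
import Mathlib

section
/- Let B and C be smooth functions on an interval, and let f, g be smooth functions satisfying B(g(y))·(g'(y))² = C(y) and 2 f'(y) g'(y) + f(y) g''(y) = 0. If ψ satisfies -ε ψ'' + B·ψ = 0, then φ(y) = f(y)·ψ(g(y)) satisfies -ε φ'' + C·φ = -ε (f''/f)·φ (at points where f does not vanish). -/
/-! Two applications of the product and chain rules give
`φ'' = f'' ψ(g) + (2 f' g' + f g'') ψ'(g) + f g'² ψ''(g)`. The middle term vanishes by the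
condition on `f` and `g`, the equation for `ψ` at `g y` turns `ε` times the last term into
`f g'² B(g) ψ(g) = C φ`, and what remains is `-ε f'' ψ(g) = -ε (f''/f) φ`. -/

theorem HasDerivAt.comp_real {ψ : ℝ → ℂ} {g : ℝ → ℝ} {ψ' : ℂ} {g' y : ℝ}
    (hψ : HasDerivAt ψ ψ' (g y)) (hg : HasDerivAt g g' y) :
    HasDerivAt (fun t => ψ (g t)) (g' * ψ') y := by
  have := hψ.scomp y hg
  rwa [Complex.real_smul] at this

theorem HasDerivAt.mul_comp_real {f ψ : ℝ → ℂ} {g : ℝ → ℝ} {f' ψ' : ℂ} {g' y : ℝ}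
    (hf : HasDerivAt f f' y) (hg : HasDerivAt g g' y) (hψ : HasDerivAt ψ ψ' (g y)) :
    HasDerivAt (fun t => f t * ψ (g t)) (f' * ψ (g y) + f y * g' * ψ') y :=
  (hf.mul (hψ.comp_real hg)).congr_deriv (by ring)

section

variable {f ψ : ℝ → ℂ} {g : ℝ → ℝ}

theorem deriv_mul_comp_real (hf : Differentiable ℝ f) (hg : Differentiable ℝ g)
    (hψ : Differentiable ℝ ψ) :
    deriv (fun t => f t * ψ (g t)) =
      fun y => deriv f y * ψ (g y) + f y * deriv g y * deriv ψ (g y) :=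
  funext fun y =>
    ((hf y).hasDerivAt.mul_comp_real (hg y).hasDerivAt (hψ (g y)).hasDerivAt).deriv

theorem deriv_deriv_mul_comp_real (hf : ContDiff ℝ 2 f) (hg : ContDiff ℝ 2 g)
    (hψ : ContDiff ℝ 2 ψ) (y : ℝ) :
    deriv (deriv (fun t => f t * ψ (g t))) y =
      deriv (deriv f) y * ψ (g y)
        + (2 * deriv f y * deriv g y + f y * deriv (deriv g) y) * deriv ψ (g y)
        + f y * deriv g y ^ 2 * deriv (deriv ψ) (g y) := by
  have hf₁ := hf.differentiable two_ne_zero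
  have hg₁ := hg.differentiable two_ne_zero
  have hψ₁ := hψ.differentiable two_ne_zero
  have hf₂ := hf.differentiable_deriv_two
  have hg₂ := hg.differentiable_deriv_two
  have hψ₂ := hψ.differentiable_deriv_two
  have hfg' : HasDerivAt (fun t => f t * deriv g t)
      (deriv f y * deriv g y + f y * deriv (deriv g) y) y :=
    (hf₁ y).hasDerivAt.mul (hg₂ y).hasDerivAt.ofReal_comp
  rw [deriv_mul_comp_real hf₁ hg₁ hψ₁]
  refine (((hf₂ y).hasDerivAt.mul_comp_real (hg₁ y).hasDerivAt (hψ₁ (g y)).hasDerivAt).add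
    (hfg'.mul_comp_real (hg₁ y).hasDerivAt (hψ₂ (g y)).hasDerivAt)).deriv.trans ?_
  ring

end

/-- Langer's transformation: if `B(g(y)) g'(y)² = C(y)` and `2 f' g' + f g'' = 0`,
and `ψ` solves `-ε ψ'' + B ψ = 0`, then `φ = f · (ψ ∘ g)` solves
`-ε φ'' + C φ = -ε (f''/f) φ` wherever `f ≠ 0`. -/
theorem langer_transformation
    (ε : ℂ) (B C : ℝ → ℂ) (f : ℝ → ℂ) (g : ℝ → ℝ) (ψ : ℝ → ℂ)
    (hf : ContDiff ℝ 2 f) (hg : ContDiff ℝ 2 g) (hψ : ContDiff ℝ 2 ψ)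
    (hBC : ∀ y : ℝ, B (g y) * (Complex.ofReal (deriv g y)) ^ 2 = C y)
    (hfg : ∀ y : ℝ, 2 * deriv f y * (Complex.ofReal (deriv g y)) + f y * (Complex.ofReal (deriv (deriv g) y)) = 0)
    (hψeq : ∀ y : ℝ, -ε * deriv (deriv ψ) y + B y * ψ y = 0) :
    ∀ y : ℝ, f y ≠ 0 →
      -ε * deriv (deriv (fun t => f t * ψ (g t))) y + C y * (f y * ψ (g y))
        = -ε * (deriv (deriv f) y / f y) * (f y * ψ (g y)) := by
  intro y hfy
  rw [deriv_deriv_mul_comp_real hf hg hψ, hfg y]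
  linear_combination f y * deriv g y ^ 2 * hψeq (g y) - f y * ψ (g y) * hBC y
    + ε * deriv (deriv f) y * ψ (g y) * mul_inv_cancel₀ hfy
end

section
/- Let ψ be a solution of the Rayleigh equation (U - c)(ψ'' - α²ψ) - U''ψ = 0 and define Ω(y) = ψ / ((U - c)·(U'ψ - (U - c)ψ')) at points where the denominator is nonzero. Then Ω satisfies the Riccati-type equation Ω' = α² Y Ω² - Y^{-1}, where Y = (U - c)². -/
/-!
With `W = U'ψ - (U - c)ψ'`, the `U'ψ'` terms cancel in `W'`, and the Rayleigh equation turns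
what is left into `W' = -α²(U - c)ψ`. Differentiating `Ω = ψ / ((U - c)W)` by the quotient rule,
the numerator becomes `((U - c)ψ' - U'ψ)W - (U - c)ψW' = -W² + α²(U - c)²ψ²`, and dividing by
`((U - c)W)²` gives the Riccati equation.
-/

section

variable {𝕜 𝕜' : Type*} [NontriviallyNormedField 𝕜] [NontriviallyNormedField 𝕜']
  [NormedAlgebra 𝕜 𝕜']

theorem hasDerivAt_deriv_mul_sub_sub_mul_deriv {U ψ : 𝕜 → 𝕜'} {c : 𝕜'} {y : 𝕜}
    (hU : DifferentiableAt 𝕜 U y) (hψ : DifferentiableAt 𝕜 ψ y)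
    (hU' : DifferentiableAt 𝕜 (deriv U) y) (hψ' : DifferentiableAt 𝕜 (deriv ψ) y) :
    HasDerivAt (fun t => deriv U t * ψ t - (U t - c) * deriv ψ t)
      (deriv (deriv U) y * ψ y - (U y - c) * deriv (deriv ψ) y) y := by
  refine ((hU'.hasDerivAt.mul hψ.hasDerivAt).sub
    ((hU.hasDerivAt.sub_const c).mul hψ'.hasDerivAt)).congr_deriv ?_
  ring

theorem HasDerivAt.div_mul_riccati {ψ V W : 𝕜 → 𝕜'} {p v k : 𝕜'} {y : 𝕜}
    (hψ : HasDerivAt ψ p y) (hV : HasDerivAt V v y) (hW : HasDerivAt W (-(k * V y * ψ y)) y)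
    (hWy : W y = v * ψ y - V y * p) (hne : V y * W y ≠ 0) :
    HasDerivAt (fun t => ψ t / (V t * W t))
      (k * V y ^ 2 * (ψ y / (V y * W y)) ^ 2 - (V y ^ 2)⁻¹) y := by
  refine (hψ.fun_div (hV.fun_mul hW) hne).congr_deriv ?_
  have hV0 : V y ≠ 0 := left_ne_zero_of_mul hne
  have hW0 : W y ≠ 0 := right_ne_zero_of_mul hne
  field_simp
  rw [hWy]
  ring

end

theorem miles_riccati_general (U : ℝ → ℂ) (α : ℝ) (c : ℂ) (ψ : ℝ → ℂ) (s : Set ℝ)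
    (hU : ContDiff ℝ 2 U) (hψ : ContDiff ℝ 2 ψ)
    (hRay : ∀ y ∈ s,
      (U y - c) * (deriv (deriv ψ) y - (α : ℂ) ^ 2 * ψ y)
        - deriv (deriv U) y * ψ y = 0)
    (hden : ∀ y ∈ s,
      (U y - c) * (deriv U y * ψ y - (U y - c) * deriv ψ y) ≠ 0) :
    ∀ y ∈ s,
      deriv (fun t => ψ t / ((U t - c) * (deriv U t * ψ t - (U t - c) * deriv ψ t))) y
        = (α : ℂ) ^ 2 * (U y - c) ^ 2 *
            (ψ y / ((U y - c) * (deriv U y * ψ y - (U y - c) * deriv ψ y))) ^ 2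
          - ((U y - c) ^ 2)⁻¹ := by
  intro y hy
  have hU1 := hU.differentiable two_ne_zero y
  have hψ1 := hψ.differentiable two_ne_zero y
  have hW : HasDerivAt (fun t => deriv U t * ψ t - (U t - c) * deriv ψ t)
      (-((α : ℂ) ^ 2 * (U y - c) * ψ y)) y := by
    refine (hasDerivAt_deriv_mul_sub_sub_mul_deriv (c := c) hU1 hψ1
      (hU.differentiable_deriv_two y) (hψ.differentiable_deriv_two y)).congr_deriv ?_
    linear_combination -hRay y hy
  exact (hψ1.hasDerivAt.div_mul_riccati (hU1.hasDerivAt.sub_const c) hW rfl (hden y hy)).deriv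

/-- Miles' transformation: if `ψ` solves the Rayleigh equation
`(U - c)(ψ'' - α²ψ) - U''ψ = 0` on an open set where the denominator does not
vanish, then `Ω = ψ / ((U - c)(U'ψ - (U - c)ψ'))` satisfies the Riccati
equation `Ω' = α² Y Ω² - Y⁻¹` with `Y = (U - c)²`. -/
theorem miles_riccati (U : ℝ → ℂ) (α : ℝ) (c : ℂ) (ψ : ℝ → ℂ) (s : Set ℝ)
    (hs : IsOpen s) (hU : ContDiff ℝ 2 U) (hψ : ContDiff ℝ 2 ψ)
    (hRay : ∀ y ∈ s,
      (U y - c) * (deriv (deriv ψ) y - (α : ℂ) ^ 2 * ψ y)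
        - deriv (deriv U) y * ψ y = 0)
    (hden : ∀ y ∈ s,
      (U y - c) * (deriv U y * ψ y - (U y - c) * deriv ψ y) ≠ 0) :
    ∀ y ∈ s,
      deriv (fun t => ψ t / ((U t - c) * (deriv U t * ψ t - (U t - c) * deriv ψ t))) y
        = (α : ℂ) ^ 2 * (U y - c) ^ 2 *
            (ψ y / ((U y - c) * (deriv U y * ψ y - (U y - c) * deriv ψ y))) ^ 2
          - ((U y - c) ^ 2)⁻¹ :=
  miles_riccati_general U α c ψ s hU hψ hRay hden
end

section
/- Let φ₁, φ₂, Q₁ be holomorphic functions near 0 with ‖φ₁‖_ρ, ‖φ₂‖_ρ, ‖Q₁‖_ρ < ∞ for some ρ > 0 with ρ‖φ₁‖_ρ < 1/2. Then there exists a holomorphic function Q near 0 with Q(0) = 0 solving Y Q''(Y) + 2Q'(Y) = φ₁(Y) Q(Y) + φ₂(Y) Q₁(Y), and ‖Q‖_ρ ≲ ‖Q₁‖_ρ with constant depending only on ‖φ₂‖_ρ and |c²₀|. -/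
/-!
Writing `Q = ∑ aₙ Yⁿ`, the operator `Y Q'' + 2 Q'` sends `Yⁿ⁺¹` to `(n + 1)(n + 2) Yⁿ` and kills
`Y⁰`, so the equation becomes the recursion `(n + 1)(n + 2) aₙ₊₁ = (φ₁ Q)ₙ + (φ₂ Q₁)ₙ`, `a₀ = 0`.
Since `(n + 1)(n + 2) ≥ 2` and the weighted norm `‖·‖_ρ` is submultiplicative, the partial sums
satisfy `‖Q‖ ≤ ρ/2 (‖φ₁‖ ‖Q‖ + ‖φ₂‖ ‖Q₁‖)`, and `ρ ‖φ₁‖ ≤ 1/2` closes an induction giving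
`‖Q‖_ρ ≤ ρ ‖φ₂‖_ρ ‖Q₁‖_ρ`. Inside the disc the series is differentiated termwise and the
right-hand side is expanded as a Cauchy product.
-/

open Finset

def cauchyProduct {R : Type*} [Semiring R] (f g : ℕ → R) (n : ℕ) : R :=
  ∑ k ∈ range (n + 1), f k * g (n - k)

section CauchyProduct

variable {R : Type*}

lemma sum_range_cauchyProduct_le {f g : ℕ → ℝ} (hf : ∀ n, 0 ≤ f n) (hg : ∀ n, 0 ≤ g n)
    (N : ℕ) :
    ∑ n ∈ range N, cauchyProduct f g n ≤ (∑ n ∈ range N, f n) * ∑ n ∈ range N, g n := by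
  simp only [cauchyProduct, sum_mul_sum]
  rw [sum_range_diag_flip N fun k j => f k * g j]
  exact sum_le_sum fun m _ => sum_le_sum_of_subset_of_nonneg
    (range_subset_range.2 (N.sub_le m)) fun k _ _ => mul_nonneg (hf m) (hg k)

lemma norm_cauchyProduct_mul_pow_le [NormedRing R] (f g : ℕ → R) {ρ : ℝ} (hρ : 0 ≤ ρ)
    (n : ℕ) :
    ‖cauchyProduct f g n‖ * ρ ^ n ≤
      cauchyProduct (fun k => ‖f k‖ * ρ ^ k) (fun k => ‖g k‖ * ρ ^ k) n := by
  rw [cauchyProduct, cauchyProduct]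
  refine (mul_le_mul_of_nonneg_right (norm_sum_le _ _) (by positivity)).trans ?_
  rw [sum_mul]
  refine sum_le_sum fun k hk => ?_
  have hpow : ρ ^ n = ρ ^ k * ρ ^ (n - k) := by
    rw [← pow_add, Nat.add_sub_cancel' (Nat.lt_succ_iff.1 (mem_range.1 hk))]
  calc ‖f k * g (n - k)‖ * ρ ^ n ≤ ‖f k‖ * ‖g (n - k)‖ * ρ ^ n := by
        gcongr; exact norm_mul_le _ _
    _ = ‖f k‖ * ρ ^ k * (‖g (n - k)‖ * ρ ^ (n - k)) := by rw [hpow]; ring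

lemma sum_range_norm_cauchyProduct_mul_pow_le [NormedRing R] (f g : ℕ → R) {ρ : ℝ}
    (hρ : 0 ≤ ρ) (N : ℕ) :
    ∑ n ∈ range N, ‖cauchyProduct f g n‖ * ρ ^ n ≤
      (∑ n ∈ range N, ‖f n‖ * ρ ^ n) * ∑ n ∈ range N, ‖g n‖ * ρ ^ n :=
  (sum_le_sum fun n _ => norm_cauchyProduct_mul_pow_le f g hρ n).trans
    (sum_range_cauchyProduct_le (fun _ => by positivity) (fun _ => by positivity) N)

lemma hasSum_cauchyProduct_mul_pow [NormedCommRing R] [CompleteSpace R] {f g : ℕ → R} {y : R}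
    (hf : Summable fun n => ‖f n * y ^ n‖) (hg : Summable fun n => ‖g n * y ^ n‖) :
    HasSum (fun n => cauchyProduct f g n * y ^ n)
      ((∑' n, f n * y ^ n) * ∑' n, g n * y ^ n) := by
  convert hasSum_sum_range_mul_of_summable_norm hf hg using 2 with n
  rw [cauchyProduct, sum_mul]
  refine sum_congr rfl fun k hk => ?_
  rw [← Nat.add_sub_cancel' (Nat.lt_succ_iff.1 (mem_range.1 hk)), pow_add,
    Nat.add_sub_cancel_left]
  ring

end CauchyProduct

def derivCoeff {R : Type*} [Semiring R] (a : ℕ → R) (n : ℕ) : R := (n + 1) * a (n + 1)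

section PowerSeries

variable {𝕜 : Type*} [RCLike 𝕜] {a : ℕ → 𝕜} {ρ : ℝ}

lemma summable_norm_mul_pow_of_norm_le (ha : Summable fun n => ‖a n‖ * ρ ^ n) {y : 𝕜}
    (hy : ‖y‖ ≤ ρ) : Summable fun n => ‖a n * y ^ n‖ :=
  ha.of_nonneg_of_le (fun _ => norm_nonneg _) fun n => by
    rw [norm_mul, norm_pow]; gcongr

lemma summable_norm_derivCoeff_mul_pow (ha : Summable fun n => ‖a n‖ * ρ ^ n) {r : ℝ}
    (hr : 0 ≤ r) (hrρ : r < ρ) : Summable fun n => ‖derivCoeff a n‖ * r ^ n := by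
  have hρ : 0 < ρ := hr.trans_lt hrρ
  set q := r / ρ
  have hq : 0 ≤ q := div_nonneg hr hρ.le
  have hq1 : q < 1 := (div_lt_one hρ).2 hrρ
  have hgeom : Summable fun n : ℕ => ((n : ℝ) + 1) * q ^ n := by
    simpa [add_mul] using (summable_pow_mul_geometric_of_norm_lt_one 1
      (by rwa [Real.norm_of_nonneg hq])).add (summable_geometric_of_lt_one hq hq1)
  -- each term of the `ρ`-series is bounded by the sum, which leaves a geometric factor `q ^ n`
  refine (hgeom.mul_left ((∑' n, ‖a n‖ * ρ ^ n) / ρ)).of_nonneg_of_le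
    (fun _ => by positivity) fun n => ?_
  have hterm : ‖a (n + 1)‖ * ρ ^ (n + 1) ≤ ∑' n, ‖a n‖ * ρ ^ n :=
    ha.le_tsum (n + 1) fun _ _ => by positivity
  have hr_eq : r ^ n = q ^ n * ρ ^ (n + 1) / ρ := by
    rw [pow_succ, mul_div_assoc, mul_div_cancel_right₀ _ hρ.ne', ← mul_pow,
      div_mul_cancel₀ _ hρ.ne']
  calc ‖derivCoeff a n‖ * r ^ n
      = ((n : ℝ) + 1) * q ^ n * (‖a (n + 1)‖ * ρ ^ (n + 1)) / ρ := by
        rw [derivCoeff, norm_mul, hr_eq]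
        norm_cast
        ring
    _ ≤ ((n : ℝ) + 1) * q ^ n * (∑' n, ‖a n‖ * ρ ^ n) / ρ := by gcongr
    _ = (∑' n, ‖a n‖ * ρ ^ n) / ρ * (((n : ℝ) + 1) * q ^ n) := by ring

lemma hasDerivAt_tsum_mul_pow (ha : Summable fun n => ‖a n‖ * ρ ^ n) {y : 𝕜} (hy : ‖y‖ < ρ) :
    HasDerivAt (fun z => ∑' n, a n * z ^ n) (∑' n, derivCoeff a n * y ^ n) y := by
  obtain ⟨r, hyr, hrρ⟩ := exists_between hy
  have hr : 0 < r := (norm_nonneg y).trans_lt hyr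
  have hu : Summable fun n => ‖a n‖ * (n * r ^ (n - 1)) := by
    refine (summable_nat_add_iff 1).1 ?_
    refine (summable_norm_derivCoeff_mul_pow ha hr.le hrρ).congr fun n => ?_
    rw [derivCoeff, norm_mul, Nat.add_sub_cancel]
    norm_cast
    ring
  have hbound : ∀ n (z : 𝕜), ‖z‖ ≤ r → ‖a n * (n * z ^ (n - 1))‖ ≤ ‖a n‖ * (n * r ^ (n - 1)) :=
    fun n z hz => by
      rw [norm_mul, norm_mul, norm_pow, RCLike.norm_natCast]; gcongr
  have hderiv := hasDerivAt_tsum_of_isPreconnected hu Metric.isOpen_ball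
    (convex_ball (0 : 𝕜) r).isPreconnected
    (fun n z _ => (hasDerivAt_pow n z).const_mul (a n))
    (fun n z hz => hbound n z (mem_ball_zero_iff.1 hz).le) (Metric.mem_ball_self hr)
    ?_ (mem_ball_zero_iff.2 hyr)
  · refine hderiv.congr_deriv ?_
    rw [Summable.tsum_eq_zero_add (hu.of_norm_bounded fun n => hbound n y hyr.le)]
    simp only [CharP.cast_eq_zero, zero_mul, mul_zero, zero_add, derivCoeff,
      Nat.add_sub_cancel]
    push_cast
    exact tsum_congr fun n => by ring
  · exact (hasSum_single 0 fun n hn => by simp [zero_pow hn]).summable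

lemma deriv_tsum_mul_pow (ha : Summable fun n => ‖a n‖ * ρ ^ n) {y : 𝕜} (hy : ‖y‖ < ρ) :
    deriv (fun z => ∑' n, a n * z ^ n) y = ∑' n, derivCoeff a n * y ^ n :=
  (hasDerivAt_tsum_mul_pow ha hy).deriv

lemma deriv_deriv_tsum_mul_pow (ha : Summable fun n => ‖a n‖ * ρ ^ n) {y : 𝕜}
    (hy : ‖y‖ < ρ) :
    deriv (deriv fun z => ∑' n, a n * z ^ n) y =
      ∑' n, derivCoeff (derivCoeff a) n * y ^ n := by
  have hderiv : deriv (fun z => ∑' n, a n * z ^ n) =ᶠ[nhds y]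
      fun z => ∑' n, derivCoeff a n * z ^ n := by
    filter_upwards [Metric.isOpen_ball.mem_nhds (mem_ball_zero_iff.2 hy)] with z hz
    exact deriv_tsum_mul_pow ha (mem_ball_zero_iff.1 hz)
  obtain ⟨r, hyr, hrρ⟩ := exists_between hy
  rw [hderiv.deriv_eq]
  exact deriv_tsum_mul_pow
    (summable_norm_derivCoeff_mul_pow ha ((norm_nonneg y).trans hyr.le) hrρ) hyr

lemma hasSum_mul_deriv_deriv_add_two_mul_deriv (ha : Summable fun n => ‖a n‖ * ρ ^ n) {y : 𝕜}
    (hy : ‖y‖ < ρ) :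
    HasSum (fun n : ℕ => ((n + 1) * (n + 2) : 𝕜) * a (n + 1) * y ^ n)
      (y * deriv (deriv fun z => ∑' n, a n * z ^ n) y
        + 2 * deriv (fun z => ∑' n, a n * z ^ n) y) := by
  rw [deriv_deriv_tsum_mul_pow ha hy, deriv_tsum_mul_pow ha hy]
  obtain ⟨r, hyr, hrρ⟩ := exists_between hy
  have hb := summable_norm_derivCoeff_mul_pow ha ((norm_nonneg y).trans hyr.le) hrρ
  have hc := summable_norm_mul_pow_of_norm_le
    (summable_norm_derivCoeff_mul_pow hb (norm_nonneg y) hyr) le_rfl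
  -- `y ∑ₙ (n + 1) bₙ₊₁ yⁿ` is `∑ₙ n bₙ yⁿ` with its vanishing zeroth term removed
  have hshift : HasSum (fun n : ℕ => (n : 𝕜) * derivCoeff a n * y ^ n)
      (y * ∑' n, derivCoeff (derivCoeff a) n * y ^ n) := by
    have h := (hasSum_nat_add_iff (f := fun n : ℕ => (n : 𝕜) * derivCoeff a n * y ^ n) 1).1
      ((hc.of_norm.hasSum.mul_left y).congr_fun fun n => by
        simp only [derivCoeff]
        push_cast
        ring)
    simpa using h
  have hb' := (summable_norm_mul_pow_of_norm_le hb hyr.le).of_norm.hasSum.mul_left 2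
  refine (hshift.add hb').congr_fun fun n => ?_
  simp only [derivCoeff]
  ring

end PowerSeries

def rayleighCoeff {K : Type*} [Field K] (c1 c2 q1 : ℕ → K) : ℕ → K
  | 0 => 0
  -- the `c1` convolution is spelled out so that the recursive calls are visibly decreasing
  | n + 1 => (∑ k ∈ range (n + 1), c1 k * rayleighCoeff c1 c2 q1 (n - k)
      + cauchyProduct c2 q1 n) / ((n + 1) * (n + 2))
  decreasing_by exact Nat.lt_succ_of_le (Nat.sub_le n k)

section RayleighCoeff

variable {K : Type*} [Field K] (c1 c2 q1 : ℕ → K)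

lemma rayleighCoeff_zero : rayleighCoeff c1 c2 q1 0 = 0 := by
  rw [rayleighCoeff]

lemma mul_rayleighCoeff_succ [CharZero K] (n : ℕ) :
    ((n + 1) * (n + 2) : K) * rayleighCoeff c1 c2 q1 (n + 1) =
      cauchyProduct c1 (rayleighCoeff c1 c2 q1) n + cauchyProduct c2 q1 n := by
  have hn : ((n + 1) * (n + 2) : K) ≠ 0 := by norm_cast
  rw [rayleighCoeff, mul_div_cancel₀ _ hn]
  rfl

end RayleighCoeff

section RayleighBound

variable {𝕜 : Type*} [RCLike 𝕜] (c1 c2 q1 : ℕ → 𝕜) {ρ : ℝ}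

lemma norm_rayleighCoeff_succ_mul_pow_le (hρ : 0 ≤ ρ) (n : ℕ) :
    ‖rayleighCoeff c1 c2 q1 (n + 1)‖ * ρ ^ (n + 1) ≤
      ρ / 2 * (‖cauchyProduct c1 (rayleighCoeff c1 c2 q1) n‖ * ρ ^ n
        + ‖cauchyProduct c2 q1 n‖ * ρ ^ n) := by
  set a := rayleighCoeff c1 c2 q1
  have hnorm : ‖((n + 1) * (n + 2) : 𝕜)‖ = (n + 1) * (n + 2) := by
    exact_mod_cast RCLike.norm_natCast (K := 𝕜) ((n + 1) * (n + 2))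
  have h2 : 2 * ‖a (n + 1)‖ ≤ ‖cauchyProduct c1 a n‖ + ‖cauchyProduct c2 q1 n‖ :=
    calc 2 * ‖a (n + 1)‖ ≤ ‖((n + 1) * (n + 2) : 𝕜)‖ * ‖a (n + 1)‖ := by
          rw [hnorm]; gcongr; nlinarith
      _ = ‖cauchyProduct c1 a n + cauchyProduct c2 q1 n‖ := by
          rw [← norm_mul, mul_rayleighCoeff_succ]
      _ ≤ _ := norm_add_le _ _
  calc ‖a (n + 1)‖ * ρ ^ (n + 1) = ρ / 2 * (2 * ‖a (n + 1)‖ * ρ ^ n) := by ring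
    _ ≤ ρ / 2 * ((‖cauchyProduct c1 a n‖ + ‖cauchyProduct c2 q1 n‖) * ρ ^ n) := by gcongr
    _ = _ := by ring

lemma sum_range_norm_rayleighCoeff_mul_pow_le (hρ : 0 ≤ ρ)
    (hc1 : Summable fun n => ‖c1 n‖ * ρ ^ n) (hc1small : ρ * ∑' n, ‖c1 n‖ * ρ ^ n ≤ 1 / 2)
    (hc2 : Summable fun n => ‖c2 n‖ * ρ ^ n) (hq1 : Summable fun n => ‖q1 n‖ * ρ ^ n) (N : ℕ) :
    ∑ n ∈ range N, ‖rayleighCoeff c1 c2 q1 n‖ * ρ ^ n ≤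
      ρ * (∑' n, ‖c2 n‖ * ρ ^ n) * ∑' n, ‖q1 n‖ * ρ ^ n := by
  set a := rayleighCoeff c1 c2 q1
  set B := ρ * (∑' n, ‖c2 n‖ * ρ ^ n) * ∑' n, ‖q1 n‖ * ρ ^ n
  have hB : 0 ≤ B := by positivity
  have partial_le {f : ℕ → 𝕜} (hf : Summable fun n => ‖f n‖ * ρ ^ n) (N : ℕ) :
      ∑ n ∈ range N, ‖f n‖ * ρ ^ n ≤ ∑' n, ‖f n‖ * ρ ^ n :=
    hf.sum_le_tsum _ fun _ _ => by positivity
  induction N with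
  | zero => simpa using hB
  | succ N ih =>
    rw [sum_range_succ', show a 0 = 0 from rayleighCoeff_zero c1 c2 q1, norm_zero, zero_mul,
      add_zero]
    calc ∑ m ∈ range N, ‖a (m + 1)‖ * ρ ^ (m + 1)
        ≤ ∑ m ∈ range N, ρ / 2 * (‖cauchyProduct c1 a m‖ * ρ ^ m
            + ‖cauchyProduct c2 q1 m‖ * ρ ^ m) :=
          sum_le_sum fun m _ => norm_rayleighCoeff_succ_mul_pow_le c1 c2 q1 hρ m
      _ = ρ / 2 * (∑ m ∈ range N, ‖cauchyProduct c1 a m‖ * ρ ^ m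
            + ∑ m ∈ range N, ‖cauchyProduct c2 q1 m‖ * ρ ^ m) := by
          rw [← mul_sum, sum_add_distrib]
      _ ≤ ρ / 2 * ((∑ m ∈ range N, ‖c1 m‖ * ρ ^ m) * ∑ m ∈ range N, ‖a m‖ * ρ ^ m
            + (∑ m ∈ range N, ‖c2 m‖ * ρ ^ m) * ∑ m ∈ range N, ‖q1 m‖ * ρ ^ m) := by
          gcongr <;> exact sum_range_norm_cauchyProduct_mul_pow_le _ _ hρ N
      _ ≤ ρ / 2 * ((∑' m, ‖c1 m‖ * ρ ^ m) * B
            + (∑' m, ‖c2 m‖ * ρ ^ m) * ∑' m, ‖q1 m‖ * ρ ^ m) := by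
          gcongr
          exacts [partial_le hc1 N, partial_le hc2 N, partial_le hq1 N]
      _ ≤ B := by nlinarith [mul_le_mul_of_nonneg_right hc1small hB]

end RayleighBound

/-- Local inversion of the Rayleigh operator near the critical layer: given
holomorphic data `φ₁, φ₂, Q₁` (with coefficients `c1, c2, q1`) of finite
weighted norm with `ρ‖φ₁‖_ρ < 1/2`, there exists a holomorphic `Q` with
`Q(0) = 0` solving `Y Q'' + 2Q' = φ₁ Q + φ₂ Q₁` on the disc of radius `ρ`,
with `‖Q‖_ρ ≲ ‖Q₁‖_ρ`, the constant depending only on `‖φ₂‖_ρ` and `|c²₀|`. -/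
theorem rayleigh_local_inversion (c1 c2 q1 : ℕ → ℂ) (ρ : ℝ) (hρ : 0 < ρ)
    (hc1 : Summable fun n => ‖c1 n‖ * ρ ^ n)
    (hc1small : ρ * ∑' n, ‖c1 n‖ * ρ ^ n < 1 / 2)
    (hc2 : Summable fun n => ‖c2 n‖ * ρ ^ n)
    (hq1 : Summable fun n => ‖q1 n‖ * ρ ^ n) :
    ∃ a : ℕ → ℂ, a 0 = 0 ∧ (Summable fun n => ‖a n‖ * ρ ^ n) ∧
      (∑' n, ‖a n‖ * ρ ^ n)
        ≤ (ρ * ‖c2 0‖ + 2 * ρ * ∑' n, ‖c2 n‖ * ρ ^ n) * ∑' n, ‖q1 n‖ * ρ ^ n ∧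
      ∀ Y : ℂ, ‖Y‖ < ρ →
        Y * deriv (deriv (fun z => ∑' n, a n * z ^ n)) Y
            + 2 * deriv (fun z => ∑' n, a n * z ^ n) Y
          = (∑' n, c1 n * Y ^ n) * (∑' n, a n * Y ^ n)
            + (∑' n, c2 n * Y ^ n) * (∑' n, q1 n * Y ^ n) := by
  set a := rayleighCoeff c1 c2 q1
  have hbound := sum_range_norm_rayleighCoeff_mul_pow_le c1 c2 q1 hρ.le hc1 hc1small.le hc2 hq1
  have ha : Summable fun n => ‖a n‖ * ρ ^ n :=
    summable_of_sum_range_le (fun _ => by positivity) hbound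
  refine ⟨a, rayleighCoeff_zero c1 c2 q1, ha, ?_, fun Y hY => ?_⟩
  · calc ∑' n, ‖a n‖ * ρ ^ n ≤ ρ * (∑' n, ‖c2 n‖ * ρ ^ n) * ∑' n, ‖q1 n‖ * ρ ^ n :=
          ha.tsum_le_of_sum_range_le hbound
      _ ≤ _ := by
          have h0 : 0 ≤ ρ * ‖c2 0‖ := by positivity
          have h1 : 0 ≤ ρ * ∑' n, ‖c2 n‖ * ρ ^ n := by positivity
          gcongr
          linarith
  · have hY' {f : ℕ → ℂ} (hf : Summable fun n => ‖f n‖ * ρ ^ n) :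
        Summable fun n => ‖f n * Y ^ n‖ :=
      summable_norm_mul_pow_of_norm_le hf hY.le
    refine (hasSum_mul_deriv_deriv_add_two_mul_deriv ha hY).unique
      (((hasSum_cauchyProduct_mul_pow (hY' hc1) (hY' ha)).add
        (hasSum_cauchyProduct_mul_pow (hY' hc2) (hY' hq1))).congr_fun fun n => ?_)
    rw [mul_rayleighCoeff_succ, add_mul]
end
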